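/- arXiv:2602.18380 — 2 statements merged into one kernel-verified Lean document; each statement's English description precedes it below -/
import Mathlib

section
/- Let (A,B) and (A′,B′) be as in the type-one single column simulation with 4 ≤ K ≤ 8, let 0 ≤ ε < 1/(3n), and let (x*,y*) be an ε-WSNE of (A′,B′). Then for each column j < k of A with P(rbʲ) > 0, we have (1/3)·P(cb₁ʲ) − ε ≤ y*_{3j} ≤ (1/3)·P(cb₁ʲ) + ε. -/
open Finset
open scoped Classical

/-- `(x, y)` is an `ε`-well-supported Nash equilibrium of the bimatrix game with
`nr` rows, `nc` columns and payoff matrices `A` (row player) and `B` (column player). -/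
def IsWSNE (nr nc : ℕ) (A B : ℕ → ℕ → ℝ) (x y : ℕ → ℝ) (ε : ℝ) : Prop :=
  (∀ i, 0 ≤ x i) ∧ (∀ i, nr ≤ i → x i = 0) ∧ (∑ i ∈ range nr, x i = 1) ∧
  (∀ j, 0 ≤ y j) ∧ (∀ j, nc ≤ j → y j = 0) ∧ (∑ j ∈ range nc, y j = 1) ∧
  (∀ i < nr, 0 < x i → ∀ i' < nr,
    ∑ j ∈ range nc, A i j * y j ≥ ∑ j ∈ range nc, A i' j * y j - ε) ∧
  (∀ j < nc, 0 < y j → ∀ j' < nc,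
    ∑ i ∈ range nr, x i * B i j ≥ ∑ i ∈ range nr, x i * B i j' - ε)

/-- Input assumptions of the type-one single column simulation: `(A,B)` has at most
`n` rows and columns (`nr` rows, `nc` columns), all entries in `[0,K]`, every row
and column of `A` and `B` has an entry `≥ 1`, the columns of `A` containing `K` are
exactly the columns `j < k`, each such column contains exactly one `K`, its other
non-zero entries lie in `{1,2}` and are either at most two values from `{1,2}` or
at most three `1`s. -/
def Scs1Input (n nr nc k : ℕ) (K : ℝ) (A B : ℕ → ℕ → ℝ) : Prop :=
  nr ≤ n ∧ nc ≤ n ∧ k ≤ nc ∧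
  (∀ i < nr, ∀ j < nc, 0 ≤ A i j ∧ A i j ≤ K) ∧
  (∀ i < nr, ∀ j < nc, 0 ≤ B i j ∧ B i j ≤ K) ∧
  (∀ i < nr, ∃ j < nc, 1 ≤ A i j) ∧ (∀ j < nc, ∃ i < nr, 1 ≤ A i j) ∧
  (∀ i < nr, ∃ j < nc, 1 ≤ B i j) ∧ (∀ j < nc, ∃ i < nr, 1 ≤ B i j) ∧
  (∀ j < k,
    ((range nr).filter fun i => A i j = K).card = 1 ∧
    (∀ i < nr, A i j = 0 ∨ A i j = 1 ∨ A i j = 2 ∨ A i j = K) ∧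
    (((range nr).filter fun i => A i j = 1 ∨ A i j = 2).card ≤ 2 ∨
      (((range nr).filter fun i => A i j = 1).card ≤ 3 ∧ ∀ i < nr, A i j ≠ 2))) ∧
  (∀ j, k ≤ j → j < nc → ∀ i < nr, A i j ≠ K)

/-- The row player's payoff matrix `A'` of the type-one single column simulation.
It has `2k + nr` rows and `2k + nc` columns.  For each `j < k`: the block
`(rbʲ, cb₁ʲ) = ({2j,2j+1}, {3j,3j+1})` equals `S = [[2,0],[0,1]]`, the block
`(rbʲ, cb₂ʲ) = ({2j,2j+1}, {3j+2})` is all ones, and the block `(rb_e, cb₁ʲ)`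
equals `encode(A_j)` (each `1` of column `A_j` kept as a `1` in the first column,
each `2` replaced by a `1` in the second column, the `K` replaced by `K/2` in the
second column).  Columns `c ≥ 3k` restricted to `rb_e` equal the columns
`A_{k}, …, A_{nc-1}`; all other entries are `0`. -/
noncomputable def scs1A (k : ℕ) (K : ℝ) (A : ℕ → ℕ → ℝ) : ℕ → ℕ → ℝ := fun r c =>
  if r < 2*k then
    if c = 3*(r/2) then (if r % 2 = 0 then 2 else 0)
    else if c = 3*(r/2) + 1 then (if r % 2 = 0 then 0 else 1)
    else if c = 3*(r/2) + 2 then 1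
    else 0
  else
    if c < 3*k then
      (if c % 3 = 0 then (if A (r - 2*k) (c/3) = 1 then 1 else 0)
       else if c % 3 = 1 then
         (if A (r - 2*k) (c/3) = K then K/2
          else if A (r - 2*k) (c/3) = 2 then 1 else 0)
       else 0)
    else A (r - 2*k) (c - 2*k)

/-- The column player's payoff matrix `B'` of the type-one single column
simulation: for `j < k` the block `(rbʲ, cb₁ʲ)` equals `T = [[0,1],[1,0]]` and the
block `(rb_e, cb₂ʲ)` equals column `B_j`; columns `c ≥ 3k` restricted to `rb_e`
equal the columns `B_k, …, B_{nc-1}`; all other entries are `0`. -/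
noncomputable def scs1B (k : ℕ) (B : ℕ → ℕ → ℝ) : ℕ → ℕ → ℝ := fun r c =>
  if r < 2*k then
    if c = 3*(r/2) then (if r % 2 = 0 then 0 else 1)
    else if c = 3*(r/2) + 1 then (if r % 2 = 0 then 1 else 0)
    else 0
  else
    if c < 3*k then (if c % 3 = 2 then B (r - 2*k) (c/3) else 0)
    else B (r - 2*k) (c - 2*k)

/-- The (un-normalized) translated column strategy `y'`: for `j < k`,
`y'_j = y*_{3j}` if `P(cb₁ʲ) ≥ 11ε` and `0` otherwise; for `j ≥ k`,
`y'_j = y*_{3k + (j-k)}`. -/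
noncomputable def scs1Y (k : ℕ) (ε : ℝ) (ystar : ℕ → ℝ) : ℕ → ℝ := fun j =>
  if j < k then (if 11 * ε ≤ ystar (3*j) + ystar (3*j+1) then ystar (3*j) else 0)
  else ystar (2*k + j)

/-! Row `2j` of `A'` earns `2y*_{3j} + y*_{3j+2}` and row `2j+1` earns `y*_{3j+1} + y*_{3j+2}`,
while columns `3j` and `3j+1` of `B'` pay the column player exactly `x*_{2j+1}` and `x*_{2j}`.
If `|2y*_{3j} - y*_{3j+1}| > ε`, one of the two rows is dropped from the support, and the
column paying its probability is then in the support while earning `0`. That is impossible: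
every row of `B'` sums to at least `1`, so the column payoffs sum to at least
`1 > (2k + nc)ε`, and some column earns more than `ε`. Hence `|2y*_{3j} - y*_{3j+1}| ≤ ε`,
which is three times the deviation of `y*_{3j}` from `P(cb₁ʲ)/3`. -/

namespace IsWSNE

variable {nr nc : ℕ} {A B : ℕ → ℕ → ℝ} {x y : ℕ → ℝ} {ε : ℝ}

theorem eq_zero_of_rowPayoff_lt (h : IsWSNE nr nc A B x y ε) {i i' : ℕ} (hi : i < nr)
    (hi' : i' < nr) (hlt : ∑ j ∈ range nc, A i j * y j < ∑ j ∈ range nc, A i' j * y j - ε) :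
    x i = 0 := by
  by_contra hne
  exact (h.2.2.2.2.2.2.1 i hi ((h.1 i).lt_of_ne' hne) i' hi').not_gt hlt

theorem colPayoff_pos (h : IsWSNE nr nc A B x y ε)
    (hB : ∀ i < nr, 1 ≤ ∑ j ∈ range nc, B i j) (hε : ε * nc < 1)
    {j : ℕ} (hj : j < nc) (hyj : 0 < y j) : 0 < ∑ i ∈ range nr, x i * B i j := by
  obtain ⟨hx0, -, hx1, -, -, -, -, hcol⟩ := h
  have htotal : 1 ≤ ∑ j' ∈ range nc, ∑ i ∈ range nr, x i * B i j' := by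
    rw [sum_comm, ← hx1]
    gcongr with i hi
    rw [← mul_sum]
    exact le_mul_of_one_le_right (hx0 i) (hB i (mem_range.1 hi))
  by_contra! hle
  have hsmall : ∑ j' ∈ range nc, ∑ i ∈ range nr, x i * B i j' ≤ ∑ _j' ∈ range nc, ε :=
    sum_le_sum fun j' hj' => by linarith [hcol j hj hyj j' (mem_range.1 hj')]
  rw [sum_const, card_range, nsmul_eq_mul] at hsmall
  linarith

end IsWSNE

section Scs1

variable {k nr nc : ℕ} {K : ℝ} {A B : ℕ → ℕ → ℝ} {j : ℕ}

theorem scs1A_rowPayoff_two_mul (y : ℕ → ℝ) (hknc : k ≤ nc) (hj : j < k) :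
    ∑ c ∈ range (2*k+nc), scs1A k K A (2*j) c * y c = 2 * y (3*j) + y (3*j+2) := by
  have hrow : ∀ c, scs1A k K A (2*j) c * y c
      = (if c = 3*j then 2 * y c else 0) + (if c = 3*j+2 then y c else 0) := by
    intro c
    simp only [scs1A, if_pos (show 2*j < 2*k by omega)]
    split_ifs <;> first | ring1 | omega
  simp only [hrow, sum_add_distrib, sum_ite_eq', mem_range, if_pos (show 3*j < 2*k+nc by omega),
    if_pos (show 3*j+2 < 2*k+nc by omega)]

theorem scs1A_rowPayoff_two_mul_add_one (y : ℕ → ℝ) (hknc : k ≤ nc) (hj : j < k) :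
    ∑ c ∈ range (2*k+nc), scs1A k K A (2*j+1) c * y c = y (3*j+1) + y (3*j+2) := by
  have hrow : ∀ c, scs1A k K A (2*j+1) c * y c
      = (if c = 3*j+1 then y c else 0) + (if c = 3*j+2 then y c else 0) := by
    intro c
    simp only [scs1A, if_pos (show 2*j+1 < 2*k by omega)]
    split_ifs <;> first | ring1 | omega
  simp only [hrow, sum_add_distrib, sum_ite_eq', mem_range,
    if_pos (show 3*j+1 < 2*k+nc by omega), if_pos (show 3*j+2 < 2*k+nc by omega)]

theorem scs1B_colPayoff_three_mul (x : ℕ → ℝ) (hj : j < k) :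
    ∑ r ∈ range (2*k+nr), x r * scs1B k B r (3*j) = x (2*j+1) := by
  rw [sum_eq_single (2*j+1)]
  · simp [scs1B, show 2*j+1 < 2*k by omega, show (2*j+1)/2 = j by omega,
      show (2*j+1) % 2 = 1 by omega]
  · intro r _ hr
    simp only [scs1B]
    split_ifs <;> first | ring1 | omega
  · intro h
    exact absurd (mem_range.2 (by omega)) h

theorem scs1B_colPayoff_three_mul_add_one (x : ℕ → ℝ) (hj : j < k) :
    ∑ r ∈ range (2*k+nr), x r * scs1B k B r (3*j+1) = x (2*j) := by
  rw [sum_eq_single (2*j)]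
  · simp [scs1B, show 2*j < 2*k by omega, show 2*j/2 = j by omega]
  · intro r _ hr
    simp only [scs1B]
    split_ifs <;> first | ring1 | omega
  · intro h
    exact absurd (mem_range.2 (by omega)) h

theorem scs1B_nonneg (hB : ∀ i < nr, ∀ j < nc, 0 ≤ B i j) (hknc : k ≤ nc) {r c : ℕ}
    (hr : r < 2*k+nr) (hc : c < 2*k+nc) : 0 ≤ scs1B k B r c := by
  simp only [scs1B]
  split_ifs <;> first | exact hB _ (by omega) _ (by omega) | norm_num

theorem scs1B_exists_one_le (hB : ∀ i < nr, ∃ j < nc, 1 ≤ B i j) (hknc : k ≤ nc) {r : ℕ}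
    (hr : r < 2*k+nr) : ∃ c < 2*k+nc, 1 ≤ scs1B k B r c := by
  by_cases hrk : r < 2*k
  · refine ⟨if r % 2 = 0 then 3*(r/2)+1 else 3*(r/2), by split_ifs <;> omega, ?_⟩
    simp only [scs1B, if_pos hrk]
    split_ifs <;> first | omega | norm_num
  obtain ⟨j, hj, hBj⟩ := hB (r - 2*k) (by omega)
  by_cases hjk : j < k
  · refine ⟨3*j+2, by omega, ?_⟩
    simpa [scs1B, hrk, show 3*j+2 < 3*k by omega, show (3*j+2) % 3 = 2 by omega,
      show (3*j+2)/3 = j by omega] using hBj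
  · refine ⟨2*k+j, by omega, ?_⟩
    simpa [scs1B, hrk, show ¬ 2*k+j < 3*k by omega] using hBj

theorem one_le_sum_scs1B (hB0 : ∀ i < nr, ∀ j < nc, 0 ≤ B i j)
    (hB1 : ∀ i < nr, ∃ j < nc, 1 ≤ B i j) (hknc : k ≤ nc) {r : ℕ} (hr : r < 2*k+nr) :
    1 ≤ ∑ c ∈ range (2*k+nc), scs1B k B r c := by
  obtain ⟨c, hc, h1⟩ := scs1B_exists_one_le hB1 hknc hr
  exact h1.trans (single_le_sum (fun c' hc' => scs1B_nonneg hB0 hknc hr (mem_range.1 hc'))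
    (mem_range.2 hc))

variable {n : ℕ} {ε : ℝ} {x y : ℕ → ℝ}

theorem scs1_colPayoff_pos (hin : Scs1Input n nr nc k K A B) (hε0 : 0 ≤ ε)
    (hε : ε < 1 / (3 * (n:ℝ))) (h : IsWSNE (2*k+nr) (2*k+nc) (scs1A k K A) (scs1B k B) x y ε)
    {c : ℕ} (hc : c < 2*k+nc) (hyc : 0 < y c) :
    0 < ∑ r ∈ range (2*k+nr), x r * scs1B k B r c := by
  obtain ⟨-, hncn, hknc, -, hB, -, -, hBrow, -⟩ := hin
  have hn : (0:ℝ) < 3 * n := one_div_pos.1 (hε0.trans_lt hε)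
  have hsize : ((2*k+nc : ℕ) : ℝ) ≤ 3 * n := by
    have : 2*k+nc ≤ 3*n := by omega
    exact_mod_cast this
  refine h.colPayoff_pos (fun r hr => one_le_sum_scs1B (fun i hi j hj => (hB i hi j hj).1)
    hBrow hknc hr) ?_ hc hyc
  calc ε * ((2*k+nc : ℕ) : ℝ) ≤ ε * (3 * n) := mul_le_mul_of_nonneg_left hsize hε0
    _ < 1 := (lt_div_iff₀ hn).1 (by simpa using hε)

theorem scs1_abs_two_mul_sub_le (hin : Scs1Input n nr nc k K A B) (hε0 : 0 ≤ ε)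
    (hε : ε < 1 / (3 * (n:ℝ))) (h : IsWSNE (2*k+nr) (2*k+nc) (scs1A k K A) (scs1B k B) x y ε)
    (hj : j < k) : |2 * y (3*j) - y (3*j+1)| ≤ ε := by
  have hknc := hin.2.2.1
  have hy : ∀ c, 0 ≤ y c := h.2.2.2.1
  have hrow₀ := scs1A_rowPayoff_two_mul (K := K) (A := A) y hknc hj
  have hrow₁ := scs1A_rowPayoff_two_mul_add_one (K := K) (A := A) y hknc hj
  rw [abs_sub_le_iff]
  constructor
  · by_contra! hgt
    have hx : x (2*j+1) = 0 :=
      h.eq_zero_of_rowPayoff_lt (i' := 2*j) (by omega) (by omega) (by linarith)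
    have hpos := scs1_colPayoff_pos hin hε0 hε h (c := 3*j) (by omega)
      (by linarith [hy (3*j+1)])
    rw [scs1B_colPayoff_three_mul x hj, hx] at hpos
    exact hpos.false
  · by_contra! hgt
    have hx : x (2*j) = 0 :=
      h.eq_zero_of_rowPayoff_lt (i' := 2*j+1) (by omega) (by omega) (by linarith)
    have hpos := scs1_colPayoff_pos hin hε0 hε h (c := 3*j+1) (by omega)
      (by linarith [hy (3*j)])
    rw [scs1B_colPayoff_three_mul_add_one x hj, hx] at hpos
    exact hpos.false

end Scs1

theorem stmt9_general (n nr nc k : ℕ) (K ε : ℝ) (A B : ℕ → ℕ → ℝ) (xstar ystar : ℕ → ℝ)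
    (hin : Scs1Input n nr nc k K A B)
    (hε0 : 0 ≤ ε) (hε : ε < 1 / (3 * (n:ℝ)))
    (hwsne : IsWSNE (2*k+nr) (2*k+nc) (scs1A k K A) (scs1B k B) xstar ystar ε) :
    ∀ j < k, 0 < xstar (2*j) + xstar (2*j+1) →
      (1/3) * (ystar (3*j) + ystar (3*j+1)) - ε ≤ ystar (3*j) ∧
      ystar (3*j) ≤ (1/3) * (ystar (3*j) + ystar (3*j+1)) + ε := by
  intro j hj _
  have hdev := abs_sub_le_iff.1 (scs1_abs_two_mul_sub_le hin hε0 hε hwsne hj)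
  constructor <;> linarith [hdev.1, hdev.2]

/-- If `0 ≤ ε < 1/(3n)` and `(x*, y*)` is an `ε`-WSNE of `(A', B')`, then for every
column `j < k` of `A` with `P(rbʲ) > 0` we have
`(1/3)·P(cb₁ʲ) - ε ≤ y*_{3j} ≤ (1/3)·P(cb₁ʲ) + ε`. -/
theorem stmt9 (n nr nc k : ℕ) (K ε : ℝ) (A B : ℕ → ℕ → ℝ) (xstar ystar : ℕ → ℝ)
    (hK4 : 4 ≤ K) (hK8 : K ≤ 8)
    (hin : Scs1Input n nr nc k K A B)
    (hε0 : 0 ≤ ε) (hε : ε < 1 / (3 * (n:ℝ)))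
    (hwsne : IsWSNE (2*k+nr) (2*k+nc) (scs1A k K A) (scs1B k B) xstar ystar ε) :
    ∀ j < k, 0 < xstar (2*j) + xstar (2*j+1) →
      (1/3) * (ystar (3*j) + ystar (3*j+1)) - ε ≤ ystar (3*j) ∧
      ystar (3*j) ≤ (1/3) * (ystar (3*j) + ystar (3*j+1)) + ε :=
  stmt9_general n nr nc k K ε A B xstar ystar hin hε0 hε hwsne
end

section
/- Let (A,B) and (A′,B′) be as in the type-one single column simulation with 4 ≤ K ≤ 8, let 0 ≤ ε < 1/(11n), and let (x*,y*) be an ε-WSNE of (A′,B′). Then P(rb_e) ≥ 1/(48n), i.e., the total probability x* places on the encoding row block is at least 1/(48n). -/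
/-! Suppose the encoding rows carry mass `d < 1/(48n)`. The columns `3j+2` and `≥ 3k` pay the
column player at most `K d ≤ 8d`, whereas the columns `3j` and `3j+1` pay `x_{2j+1}` and `x_{2j}`,
so by pigeonhole one of them pays at least `(1-d)/(2n)`; as `ε < 1/(11n)`, the former columns are
never played. In block `j` the row `2j` then pays `2 y_{3j}`, the row `2j+1` pays `y_{3j+1}`, and
the encoding row holding the `K` of `A_j` pays at least `(K/2) y_{3j+1} ≥ 2 y_{3j+1}`. A played
column of the block still pays more than `K d ≥ 0`, so the row of the block it rewards is played,
and the well-supported conditions for that row force `y_{3j} + y_{3j+1} ≤ 2ε`. Summing over the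
`k ≤ n` blocks gives `1 ≤ 2nε < 2/11`. -/

open Finset
open scoped Classical

def rowPayoff (nc : ℕ) (A : ℕ → ℕ → ℝ) (y : ℕ → ℝ) (i : ℕ) : ℝ :=
  ∑ j ∈ range nc, A i j * y j

def colPayoff (nr : ℕ) (B : ℕ → ℕ → ℝ) (x : ℕ → ℝ) (j : ℕ) : ℝ :=
  ∑ i ∈ range nr, x i * B i j

lemma sum_range_three_mul {M : Type*} [AddCommMonoid M] (k : ℕ) (f : ℕ → M) :
    ∑ c ∈ range (3*k), f c = ∑ j ∈ range k, (f (3*j) + f (3*j+1) + f (3*j+2)) := by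
  induction k with
  | zero => simp
  | succ k ih =>
    rw [show 3*(k+1) = 3*k+1+1+1 by ring, sum_range_succ, sum_range_succ, sum_range_succ, ih,
      sum_range_succ]
    abel

lemma sum_range_eq_sum_pairs_of_eq_zero {M : Type*} [AddCommMonoid M] {k m : ℕ} {f : ℕ → M}
    (hf : ∀ c < 3*k+m, (c % 3 = 2 ∨ 3*k ≤ c) → f c = 0) :
    ∑ c ∈ range (3*k+m), f c = ∑ j ∈ range k, (f (3*j) + f (3*j+1)) := by
  rw [sum_range_add, sum_range_three_mul,
    sum_eq_zero fun c hc => hf _ (by have := mem_range.1 hc; omega) (Or.inr (by omega)), add_zero]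
  refine sum_congr rfl fun j hj => ?_
  rw [hf (3*j+2) (by have := mem_range.1 hj; omega) (Or.inl (by omega)), add_zero]

section Payoffs

variable {k nr nc : ℕ} {K : ℝ} {A B : ℕ → ℕ → ℝ} {x y : ℕ → ℝ}

lemma colPayoff_scs1B_three_mul {j : ℕ} (hj : j < k) :
    colPayoff (2*k+nr) (scs1B k B) x (3*j) = x (2*j+1) := by
  rw [colPayoff, sum_eq_single_of_mem (2*j+1) (mem_range.2 (by omega))]
  · unfold scs1B; split_ifs <;> first | omega | simp
  · intro i _ hi; unfold scs1B; split_ifs <;> first | omega | simp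

lemma colPayoff_scs1B_three_mul_add_one {j : ℕ} (hj : j < k) :
    colPayoff (2*k+nr) (scs1B k B) x (3*j+1) = x (2*j) := by
  rw [colPayoff, sum_eq_single_of_mem (2*j) (mem_range.2 (by omega))]
  · unfold scs1B; split_ifs <;> first | omega | simp
  · intro i _ hi; unfold scs1B; split_ifs <;> first | omega | simp

lemma rowPayoff_scs1A_two_mul {j : ℕ} (hj : j < k) (hk : k ≤ nc) :
    rowPayoff (2*k+nc) (scs1A k K A) y (2*j) = 2 * y (3*j) + y (3*j+2) := by
  rw [rowPayoff, sum_eq_add_of_mem (3*j) (3*j+2) (mem_range.2 (by omega))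
    (mem_range.2 (by omega)) (by omega)]
  · unfold scs1A; split_ifs <;> first | omega | simp
  · rintro c - ⟨h₁, h₂⟩; unfold scs1A; split_ifs <;> first | omega | simp

lemma rowPayoff_scs1A_two_mul_add_one {j : ℕ} (hj : j < k) (hk : k ≤ nc) :
    rowPayoff (2*k+nc) (scs1A k K A) y (2*j+1) = y (3*j+1) + y (3*j+2) := by
  rw [rowPayoff, sum_eq_add_of_mem (3*j+1) (3*j+2) (mem_range.2 (by omega))
    (mem_range.2 (by omega)) (by omega)]
  · unfold scs1A; split_ifs <;> first | omega | simp
  · rintro c - ⟨h₁, h₂⟩; unfold scs1A; split_ifs <;> first | omega | simp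

lemma colPayoff_scs1B_le {c : ℕ} (hx : ∀ i, 0 ≤ x i) (hB : ∀ i < nr, ∀ j < nc, B i j ≤ K)
    (hk : k ≤ nc) (hc : c < 2*k+nc) (hcol : c % 3 = 2 ∨ 3*k ≤ c) :
    colPayoff (2*k+nr) (scs1B k B) x c ≤ K * ∑ i ∈ range nr, x (2*k+i) := by
  have hblocks : ∀ i < 2*k, scs1B k B i c = 0 := by
    intro i hi; unfold scs1B; split_ifs <;> first | omega | rfl
  rw [colPayoff, sum_range_add, sum_eq_zero fun i hi => by rw [hblocks i (mem_range.1 hi), mul_zero],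
    zero_add, mul_sum]
  refine sum_le_sum fun i hi => ?_
  rw [mul_comm K]
  refine mul_le_mul_of_nonneg_left ?_ (hx _)
  have hi := mem_range.1 hi
  unfold scs1B; split_ifs <;> first | omega | exact hB _ (by omega) _ (by omega)

lemma scs1A_encoding_nonneg {i c : ℕ} (hK : 0 ≤ K) (hA : ∀ i < nr, ∀ j < nc, 0 ≤ A i j)
    (hk : k ≤ nc) (hi : i < nr) (hc : c < 2*k+nc) : 0 ≤ scs1A k K A (2*k+i) c := by
  unfold scs1A; split_ifs <;> first | omega | positivity | exact hA _ (by omega) _ (by omega)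

lemma le_rowPayoff_scs1A_encoding {i j : ℕ} (hK : 0 ≤ K) (hA : ∀ i < nr, ∀ j < nc, 0 ≤ A i j)
    (hy : ∀ c, 0 ≤ y c) (hk : k ≤ nc) (hi : i < nr) (hj : j < k) (hiK : A i j = K) :
    K / 2 * y (3*j+1) ≤ rowPayoff (2*k+nc) (scs1A k K A) y (2*k+i) := by
  have hentry : scs1A k K A (2*k+i) (3*j+1) = K / 2 := by
    have hcol : (3*j+1) / 3 = j := by omega
    unfold scs1A; split_ifs <;> first | omega | simp_all
  rw [← hentry]
  exact single_le_sum (fun c hc => mul_nonneg (scs1A_encoding_nonneg hK hA hk hi (mem_range.1 hc))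
    (hy c)) (mem_range.2 (by omega))

lemma exists_colPayoff_scs1B_eq {i : ℕ} (hi : i < 2*k) :
    ∃ c < 3*k, colPayoff (2*k+nr) (scs1B k B) x c = x i := by
  obtain ⟨j, rfl | rfl⟩ := Nat.even_or_odd' i
  · exact ⟨3*j+1, by omega, colPayoff_scs1B_three_mul_add_one (by omega)⟩
  · exact ⟨3*j, by omega, colPayoff_scs1B_three_mul (by omega)⟩

lemma exists_colPayoff_scs1B_ge (hk : 0 < k) :
    ∃ c < 3*k, ∑ i ∈ range (2*k), x i ≤ 2*k * colPayoff (2*k+nr) (scs1B k B) x c := by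
  obtain ⟨i, hi, hmax⟩ := (range (2*k)).exists_max_image x (nonempty_range_iff.2 (by omega))
  obtain ⟨c, hc, hcx⟩ := exists_colPayoff_scs1B_eq (nr := nr) (B := B) (x := x) (mem_range.1 hi)
  refine ⟨c, hc, hcx ▸ ?_⟩
  simpa using sum_le_card_nsmul _ _ _ hmax

lemma add_le_two_mul_of_isWSNE {ε : ℝ} {i j : ℕ} (hK : 4 ≤ K) (hε : 0 ≤ ε)
    (hA : ∀ i < nr, ∀ j < nc, 0 ≤ A i j) (hk : k ≤ nc) (hi : i < nr) (hj : j < k) (hiK : A i j = K)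
    (hwsne : IsWSNE (2*k+nr) (2*k+nc) (scs1A k K A) (scs1B k B) x y ε)
    (hplayed : ∀ c < 2*k+nc, 0 < y c → 0 < colPayoff (2*k+nr) (scs1B k B) x c)
    (hy₂ : y (3*j+2) = 0) :
    y (3*j) + y (3*j+1) ≤ 2*ε := by
  obtain ⟨-, -, -, hy, -, -, hrow, -⟩ := hwsne
  replace hrow : ∀ r < 2*k+nr, 0 < x r → ∀ r' < 2*k+nr,
      rowPayoff (2*k+nc) (scs1A k K A) y r ≥ rowPayoff (2*k+nc) (scs1A k K A) y r' - ε := hrow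
  have hr₀ := rowPayoff_scs1A_two_mul (K := K) (A := A) (y := y) hj hk
  have hr₁ := rowPayoff_scs1A_two_mul_add_one (K := K) (A := A) (y := y) hj hk
  have hre := le_rowPayoff_scs1A_encoding (by linarith) hA hy hk hi hj hiK
  rw [hy₂, add_zero] at hr₀ hr₁
  have hKb : 2 * y (3*j+1) ≤ K / 2 * y (3*j+1) :=
    mul_le_mul_of_nonneg_right (by linarith) (hy _)
  rcases (hy (3*j)).eq_or_lt with ha | ha
  · rcases (hy (3*j+1)).eq_or_lt with hb | hb
    · linarith
    · have hx := colPayoff_scs1B_three_mul_add_one (nr := nr) (B := B) (x := x) hj ▸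
        hplayed _ (by omega) hb
      have := hrow (2*j) (by omega) hx (2*k+i) (by omega)
      linarith
  · have hx := colPayoff_scs1B_three_mul (nr := nr) (B := B) (x := x) hj ▸
      hplayed _ (by omega) ha
    have h₀ := hrow (2*j+1) (by omega) hx (2*j) (by omega)
    have hₑ := hrow (2*j+1) (by omega) hx (2*k+i) (by omega)
    linarith

end Payoffs

lemma mul_lt_colPayoff_of_isWSNE {n nr nc k : ℕ} {K ε : ℝ} {A B : ℕ → ℕ → ℝ} {x y : ℕ → ℝ}
    (hK8 : K ≤ 8) (hk : k ≤ nc) (hnc : nc ≤ n) (hε : ε < 1 / (11 * (n:ℝ)))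
    (hwsne : IsWSNE (2*k+nr) (2*k+nc) (scs1A k K A) (scs1B k B) x y ε)
    (hd : ∑ i ∈ range nr, x (2*k+i) < 1 / (48 * (n:ℝ))) {c : ℕ} (hc : c < 2*k+nc)
    (hyc : 0 < y c) :
    K * ∑ i ∈ range nr, x (2*k+i) < colPayoff (2*k+nr) (scs1B k B) x c := by
  obtain ⟨hx0, -, hx1, -, -, -, -, hcol⟩ := hwsne
  replace hcol : ∀ c < 2*k+nc, 0 < y c → ∀ c' < 2*k+nc,
      colPayoff (2*k+nr) (scs1B k B) x c ≥ colPayoff (2*k+nr) (scs1B k B) x c' - ε := hcol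
  set d := ∑ i ∈ range nr, x (2*k+i)
  have hd0 : 0 ≤ d := sum_nonneg fun i _ => hx0 _
  have hn : (0:ℝ) < 48 * n := one_div_pos.1 (hd0.trans_lt hd)
  have hn1 : (1:ℝ) ≤ n := Nat.one_le_cast.2 (Nat.cast_pos.1 (by linarith : (0:ℝ) < n))
  have hnd : n * d < 1/48 := by rw [lt_div_iff₀ hn] at hd; linarith
  have hnε : n * ε < 1/11 := by rw [lt_div_iff₀ (by positivity)] at hε; linarith
  have hmass : ∑ i ∈ range (2*k), x i = 1 - d := by rw [sum_range_add] at hx1; linarith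
  have hk₀ : 0 < k := by
    by_contra! h
    rw [Nat.le_zero.1 h, mul_zero, sum_range_zero] at hmass
    nlinarith
  obtain ⟨c₀, hc₀, hc₀ge⟩ := exists_colPayoff_scs1B_ge (nr := nr) (B := B) (x := x) hk₀
  rw [hmass] at hc₀ge
  have hp₀ : 0 ≤ colPayoff (2*k+nr) (scs1B k B) x c₀ := by
    by_contra! h
    nlinarith
  have hkn : (k:ℝ) ≤ n := by exact_mod_cast hk.trans hnc
  have h₁ := mul_le_mul_of_nonneg_left (ge_iff_le.1 (hcol c hc hyc c₀ (by omega)))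
    (by positivity : (0:ℝ) ≤ 2*n)
  have h₂ := mul_le_mul_of_nonneg_right (mul_le_mul_of_nonneg_left hkn zero_le_two) hp₀
  have h₃ := mul_le_mul_of_nonneg_left (mul_le_mul_of_nonneg_right hK8 hd0)
    (by positivity : (0:ℝ) ≤ 2*n)
  have h₄ := mul_le_mul_of_nonneg_right hn1 hd0
  -- `2n P(c) ≥ 1 - d - 2nε > 1/3 > 16nd ≥ 2n K d`
  refine lt_of_mul_lt_mul_left ?_ (by positivity : (0:ℝ) ≤ 2*n)
  linarith

/-- If `4 ≤ K ≤ 8`, `0 ≤ ε < 1/(11n)` and `(x*, y*)` is an `ε`-WSNE of `(A', B')`,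
then the total probability placed by `x*` on the encoding row block `rb_e` is at
least `1/(48n)`. -/
theorem stmt11 (n nr nc k : ℕ) (K ε : ℝ) (A B : ℕ → ℕ → ℝ) (xstar ystar : ℕ → ℝ)
    (hK4 : 4 ≤ K) (hK8 : K ≤ 8)
    (hin : Scs1Input n nr nc k K A B)
    (hε0 : 0 ≤ ε) (hε : ε < 1 / (11 * (n:ℝ)))
    (hwsne : IsWSNE (2*k+nr) (2*k+nc) (scs1A k K A) (scs1B k B) xstar ystar ε) :
    1 / (48 * (n:ℝ)) ≤ ∑ i ∈ range nr, xstar (2*k+i) := by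
  obtain ⟨-, hncn, hknc, hA, hB, -, -, -, -, hKcol, -⟩ := hin
  obtain ⟨hx0, -, -, hy0, -, hy1, -, -⟩ := id hwsne
  by_contra! hd
  have hplayed := fun c (hc : c < 2*k+nc) =>
    mul_lt_colPayoff_of_isWSNE hK8 hknc hncn hε hwsne hd hc
  have hKd : 0 ≤ K * ∑ i ∈ range nr, xstar (2*k+i) :=
    mul_nonneg (by linarith) (sum_nonneg fun i _ => hx0 _)
  have hvanish : ∀ c < 2*k+nc, (c % 3 = 2 ∨ 3*k ≤ c) → ystar c = 0 := by
    intro c hc hc'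
    by_contra hne
    have := hplayed c hc ((hy0 c).lt_of_ne' hne)
    linarith [colPayoff_scs1B_le hx0 (fun i hi j hj => (hB i hi j hj).2) hknc hc hc']
  have hsum : ∑ j ∈ range k, (ystar (3*j) + ystar (3*j+1)) = 1 := by
    rw [← hy1, show 2*k+nc = 3*k+(nc-k) by omega,
      sum_range_eq_sum_pairs_of_eq_zero fun c hc h => hvanish c (by omega) h]
  have hblock : ∀ j ∈ range k, ystar (3*j) + ystar (3*j+1) ≤ 2*ε := by
    intro j hj
    obtain ⟨i, hi⟩ := card_pos.1 ((hKcol j (mem_range.1 hj)).1 ▸ one_pos)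
    rw [mem_filter, mem_range] at hi
    exact add_le_two_mul_of_isWSNE hK4 hε0 (fun i hi j hj => (hA i hi j hj).1) hknc hi.1
      (mem_range.1 hj) hi.2 hwsne (fun c hc hyc => hKd.trans_lt (hplayed c hc hyc))
      (hvanish _ (by have := mem_range.1 hj; omega) (Or.inl (by omega)))
  have hkε : 1 ≤ k * (2*ε) := by
    calc (1:ℝ) = _ := hsum.symm
      _ ≤ _ := sum_le_sum hblock
      _ = k * (2*ε) := by rw [sum_const, card_range, nsmul_eq_mul]
  have hn : (0:ℝ) < 11 * n := one_div_pos.1 (hε0.trans_lt hε)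
  rw [lt_div_iff₀ hn] at hε
  nlinarith [mul_le_mul_of_nonneg_right (show (k:ℝ) ≤ n by exact_mod_cast hknc.trans hncn) hε0]
end
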